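/- arXiv:1604.02111 — 10 statements merged into one kernel-verified Lean document; each statement's English description precedes it below -/
import Mathlib

section
/- Let A₀ = U₀S₀V₀ᵀ where U₀ ∈ ℝ^{n×r} and V₀ ∈ ℝ^{m×r} have orthonormal columns and S₀ ∈ ℝ^{r×r}, and let D ∈ ℝ^{n×m}. Suppose U₁ ∈ ℝ^{n×r} and S' ∈ ℝ^{r×r} satisfy U₁ᵀU₁ = I and U₁S' = U₀S₀ + DV₀; set S'' = S' − U₁ᵀDV₀; and suppose V₁ ∈ ℝ^{m×r} and S₁ ∈ ℝ^{r×r} satisfy V₁ᵀV₁ = I and V₁S₁ᵀ = V₀S''ᵀ + DᵀU₁. Then U₁S₁V₁ᵀ = U₁U₁ᵀ(A₀+D) + (A₀+D)V₀V₀ᵀ − U₁U₁ᵀ(A₀+D)V₀V₀ᵀ. In other words, the output of the projector-splitting algorithm is the projection of A₀ + D onto the tangent space spanned by the left factor U₁ and the right factor V₀. -/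
open Matrix

/-- **Projector-splitting step as a tangent-space projection.**
Given `A₀ = U₀ S₀ V₀ᵀ` with orthonormal factors, a direction `D`, and the
intermediate factors of the projector-splitting algorithm, the output
`U₁ S₁ V₁ᵀ` equals the projection of `A₀ + D` onto the tangent space
spanned by the left factor `U₁` and the right factor `V₀`. -/
theorem projector_splitting_is_tangent_projection
    {n m r : ℕ}
    (U₀ U₁ : Matrix (Fin n) (Fin r) ℝ)
    (V₀ V₁ : Matrix (Fin m) (Fin r) ℝ)
    (S₀ S' S₁ : Matrix (Fin r) (Fin r) ℝ)
    (D : Matrix (Fin n) (Fin m) ℝ)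
    (hU₀ : U₀ᵀ * U₀ = 1) (hV₀ : V₀ᵀ * V₀ = 1)
    (hU₁ : U₁ᵀ * U₁ = 1) (hV₁ : V₁ᵀ * V₁ = 1)
    (A₀ : Matrix (Fin n) (Fin m) ℝ) (hA₀ : A₀ = U₀ * S₀ * V₀ᵀ)
    (hstep1 : U₁ * S' = U₀ * S₀ + D * V₀)
    (S'' : Matrix (Fin r) (Fin r) ℝ) (hS'' : S'' = S' - U₁ᵀ * D * V₀)
    (hstep3 : V₁ * S₁ᵀ = V₀ * S''ᵀ + Dᵀ * U₁) :
    U₁ * S₁ * V₁ᵀ =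
      U₁ * U₁ᵀ * (A₀ + D) + (A₀ + D) * (V₀ * V₀ᵀ)
        - U₁ * U₁ᵀ * (A₀ + D) * (V₀ * V₀ᵀ) := by
  have h3 : S₁ * V₁ᵀ = S'' * V₀ᵀ + U₁ᵀ * D := by
    have h := congrArg Matrix.transpose hstep3
    simpa [Matrix.transpose_add, Matrix.transpose_mul, Matrix.transpose_transpose] using h
  have hAV : A₀ * V₀ = U₀ * S₀ := by
    rw [hA₀, Matrix.mul_assoc (U₀ * S₀), hV₀, Matrix.mul_one]
  have hP : A₀ * (V₀ * V₀ᵀ) = A₀ := by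
    rw [← Matrix.mul_assoc, hAV, ← hA₀]
  have hU1S' : U₁ * S' = (A₀ + D) * V₀ := by rw [hstep1, Matrix.add_mul, hAV]
  have key : U₁ * S₁ * V₁ᵀ
      = (A₀ + D) * V₀ * V₀ᵀ - U₁ * U₁ᵀ * (D * (V₀ * V₀ᵀ)) + U₁ * U₁ᵀ * D := by
    rw [Matrix.mul_assoc, h3, hS'', Matrix.mul_add, Matrix.sub_mul, Matrix.mul_sub,
      ← Matrix.mul_assoc U₁ S', hU1S']
    simp only [Matrix.mul_assoc]
  have hexp : U₁ * U₁ᵀ * (A₀ + D) * (V₀ * V₀ᵀ)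
      = U₁ * U₁ᵀ * A₀ + U₁ * U₁ᵀ * (D * (V₀ * V₀ᵀ)) := by
    rw [Matrix.mul_assoc (U₁ * U₁ᵀ) (A₀ + D), Matrix.add_mul, Matrix.mul_add, hP]
  rw [key, hexp]
  simp only [Matrix.mul_add, Matrix.add_mul, Matrix.mul_assoc]
  abel
end

section
/- Let X* = U*S*V*ᵀ where U* ∈ ℝ^{n×q} and V* ∈ ℝ^{m×q} have orthonormal columns and S* ∈ ℝ^{q×q}, with q ≤ r. Let H ∈ ℝ^{n×m}, let V₀ ∈ ℝ^{m×r} have orthonormal columns, and let U₁ have orthonormal columns and the same column space as (X*+H)V₀ (i.e. U₁U₁ᵀ(X*+H)V₀ = (X*+H)V₀ and U₁ = (X*+H)V₀M for some matrix M). Set sin θ := ‖V*ᵀ(I − V₀V₀ᵀ)‖₂ and assume sin θ < 1. Then ‖(I − U₁U₁ᵀ) X* (I − V₀V₀ᵀ)‖₂ ≤ ‖H‖₂ · sin θ / √(1 − sin²θ), i.e. the normal component of X* is bounded by ‖H‖₂ times the spectral norm of the tangent of the principal angles between the subspaces spanned by V₀ and V*. -/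
open Matrix

/-- The spectral (ℓ²-operator) norm of a real matrix. -/
noncomputable def specNorm {n m : ℕ} (A : Matrix (Fin n) (Fin m) ℝ) : ℝ :=
  ‖LinearMap.toContinuousLinearMap (Matrix.toEuclideanLin A)‖

open scoped Matrix.Norms.L2Operator

lemma specNorm_eq_l2 {n m : ℕ} (A : Matrix (Fin n) (Fin m) ℝ) : specNorm A = ‖A‖ := rfl

lemma l2_norm_transpose {a b : ℕ} (A : Matrix (Fin a) (Fin b) ℝ) : ‖Aᵀ‖ = ‖A‖ := by
  have h : Aᴴ = Aᵀ := by ext i j; simp [Matrix.conjTranspose_apply]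
  rw [← h, Matrix.l2_opNorm_conjTranspose]

lemma l2_norm_transpose_mul_self {a b : ℕ} (A : Matrix (Fin a) (Fin b) ℝ) :
    ‖Aᵀ * A‖ = ‖A‖ * ‖A‖ := by
  have h : Aᴴ = Aᵀ := by ext i j; simp [Matrix.conjTranspose_apply]
  rw [← h, Matrix.l2_opNorm_conjTranspose_mul_self]

lemma l2_norm_one_le {a : ℕ} : ‖(1 : Matrix (Fin a) (Fin a) ℝ)‖ ≤ 1 := by
  rw [Matrix.cstar_norm_def, _root_.map_one]
  exact ContinuousLinearMap.norm_id_le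

/-- A matrix with orthonormal columns has operator norm at most 1. -/
lemma l2_norm_le_one_of_orth {a b : ℕ} (A : Matrix (Fin a) (Fin b) ℝ)
    (h : Aᵀ * A = 1) : ‖A‖ ≤ 1 := by
  have h2 : ‖A‖ * ‖A‖ ≤ 1 := by rw [← l2_norm_transpose_mul_self, h]; exact l2_norm_one_le
  nlinarith [norm_nonneg A]

/-- A symmetric idempotent has operator norm at most 1. -/
lemma l2_norm_proj_le_one {a : ℕ} (P : Matrix (Fin a) (Fin a) ℝ)
    (hsymm : Pᵀ = P) (hidem : P * P = P) : ‖P‖ ≤ 1 := by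
  have h2 : ‖P‖ * ‖P‖ = ‖P‖ := by rw [← l2_norm_transpose_mul_self, hsymm, hidem]
  nlinarith [norm_nonneg P]

set_option maxHeartbeats 1000000 in
/-- **Bound on the normal component.** If `X* = U* S* V*ᵀ` with orthonormal
`U*`, `V*`, `V₀` has orthonormal columns, and `U₁` is an orthonormal basis of
the column space of `(X* + H) V₀`, then the normal component
`(I − U₁U₁ᵀ) X* (I − V₀V₀ᵀ)` is bounded in spectral norm by
`‖H‖₂ · tan θ`, where `sin θ = ‖V*ᵀ(I − V₀V₀ᵀ)‖₂` is the sine of the largest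
principal angle between the column spans of `V₀` and `V*`. -/
theorem normal_component_bound
    {n m q r p : ℕ} (hqr : q ≤ r)
    (Ustar : Matrix (Fin n) (Fin q) ℝ)
    (Sstar : Matrix (Fin q) (Fin q) ℝ)
    (Vstar : Matrix (Fin m) (Fin q) ℝ)
    (hUstar : Ustarᵀ * Ustar = 1) (hVstar : Vstarᵀ * Vstar = 1)
    (H : Matrix (Fin n) (Fin m) ℝ)
    (V₀ : Matrix (Fin m) (Fin r) ℝ) (hV₀ : V₀ᵀ * V₀ = 1)
    (U₁ : Matrix (Fin n) (Fin p) ℝ) (hU₁ : U₁ᵀ * U₁ = 1)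
    (Xstar : Matrix (Fin n) (Fin m) ℝ) (hXstar : Xstar = Ustar * Sstar * Vstarᵀ)
    (hspan : U₁ * U₁ᵀ * ((Xstar + H) * V₀) = (Xstar + H) * V₀)
    (hspan' : ∃ M : Matrix (Fin r) (Fin p) ℝ, U₁ = (Xstar + H) * V₀ * M)
    (sinθ : ℝ) (hsinθ : sinθ = specNorm (Vstarᵀ * (1 - V₀ * V₀ᵀ)))
    (hθ : sinθ < 1) :
    specNorm ((1 - U₁ * U₁ᵀ) * Xstar * (1 - V₀ * V₀ᵀ)) ≤
      specNorm H * sinθ / Real.sqrt (1 - sinθ ^ 2) := by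
  clear hspan' hqr
  set Q : Matrix (Fin m) (Fin m) ℝ := 1 - V₀ * V₀ᵀ with hQ
  set P : Matrix (Fin n) (Fin n) ℝ := 1 - U₁ * U₁ᵀ with hP
  set C : Matrix (Fin q) (Fin m) ℝ := Vstarᵀ * Q with hC
  set W : Matrix (Fin q) (Fin r) ℝ := Vstarᵀ * V₀ with hW
  -- basics about sinθ
  have hs0 : 0 ≤ sinθ := by rw [hsinθ, specNorm_eq_l2]; exact norm_nonneg _
  have hsC : ‖C‖ = sinθ := by rw [hsinθ, specNorm_eq_l2]
  have h1s : (0:ℝ) < 1 - sinθ ^ 2 := by nlinarith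
  -- Q is a symmetric idempotent
  have hQsymm : Qᵀ = Q := by
    rw [hQ]; rw [Matrix.transpose_sub, Matrix.transpose_one, Matrix.transpose_mul,
      Matrix.transpose_transpose]
  have hQidem : Q * Q = Q := by
    rw [hQ]
    simp only [Matrix.sub_mul, Matrix.mul_sub, Matrix.one_mul, Matrix.mul_one]
    rw [show V₀ * V₀ᵀ * (V₀ * V₀ᵀ) = V₀ * (V₀ᵀ * V₀) * V₀ᵀ by
      simp only [Matrix.mul_assoc], hV₀, Matrix.mul_one]
    abel
  have hPsymm : Pᵀ = P := by
    rw [hP]; rw [Matrix.transpose_sub, Matrix.transpose_one, Matrix.transpose_mul,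
      Matrix.transpose_transpose]
  have hPidem : P * P = P := by
    rw [hP]
    simp only [Matrix.sub_mul, Matrix.mul_sub, Matrix.one_mul, Matrix.mul_one]
    rw [show U₁ * U₁ᵀ * (U₁ * U₁ᵀ) = U₁ * (U₁ᵀ * U₁) * U₁ᵀ by
      simp only [Matrix.mul_assoc], hU₁, Matrix.mul_one]
    abel
  -- K := C * Cᵀ and W * Wᵀ = 1 - K
  set K : Matrix (Fin q) (Fin q) ℝ := C * Cᵀ with hK
  have hKval : K = 1 - W * Wᵀ := by
    rw [hK, hC, Matrix.transpose_mul, hQsymm, Matrix.transpose_transpose]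
    rw [show Vstarᵀ * Q * (Q * Vstar) = Vstarᵀ * (Q * Q) * Vstar by
      simp only [Matrix.mul_assoc], hQidem]
    rw [hQ, Matrix.mul_sub, Matrix.mul_one, Matrix.sub_mul, hVstar, hW]
    rw [Matrix.transpose_mul, Matrix.transpose_transpose]
    simp only [Matrix.mul_assoc]
  have hWWt : W * Wᵀ = 1 - K := by rw [hKval]; abel
  have hKnorm : ‖K‖ ≤ sinθ ^ 2 := by
    calc ‖C * Cᵀ‖ ≤ ‖C‖ * ‖Cᵀ‖ := Matrix.l2_opNorm_mul _ _
    _ = sinθ ^ 2 := by rw [l2_norm_transpose, hsC]; ring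
  have hKlt : ‖K‖ < 1 := lt_of_le_of_lt hKnorm (by nlinarith)
  -- the unit 1 - K = W * Wᵀ
  set u : (Matrix (Fin q) (Fin q) ℝ)ˣ := Units.oneSub K hKlt with hu
  have huval : (↑u : Matrix (Fin q) (Fin q) ℝ) = W * Wᵀ := by rw [hWWt]; rfl
  set N : Matrix (Fin q) (Fin q) ℝ := ↑u⁻¹ with hN
  have huN : W * Wᵀ * N = 1 := by rw [← huval, hN]; exact u.mul_inv
  have hNu : N * (W * Wᵀ) = 1 := by rw [← huval, hN]; exact u.inv_mul
  have hWWN : W * (Wᵀ * N) = 1 := by rw [← Matrix.mul_assoc]; exact huN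
  -- norm bound on N
  have hNnorm : ‖N‖ ≤ (1 - sinθ ^ 2)⁻¹ := by
    have hid : N = 1 + K * N := by
      have h0 : (1 - K) * N = 1 := by rw [← hWWt]; exact huN
      have h2 : N - K * N = 1 := by rw [← h0, Matrix.sub_mul, Matrix.one_mul]
      exact sub_eq_iff_eq_add.mp h2
    have : ‖N‖ ≤ 1 + sinθ ^ 2 * ‖N‖ := by
      calc ‖N‖ = ‖1 + K * N‖ := by rw [← hid]
      _ ≤ ‖(1 : Matrix (Fin q) (Fin q) ℝ)‖ + ‖K * N‖ := norm_add_le _ _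
      _ ≤ 1 + ‖K‖ * ‖N‖ := add_le_add l2_norm_one_le (Matrix.l2_opNorm_mul _ _)
      _ ≤ 1 + sinθ ^ 2 * ‖N‖ := by
          have := norm_nonneg N
          nlinarith
    rw [show (1 - sinθ^2)⁻¹ = 1/(1-sinθ^2) by ring, le_div_iff₀ h1s]
    nlinarith [norm_nonneg N]
  -- N is symmetric
  have hWWsymm : (W * Wᵀ)ᵀ = W * Wᵀ := by
    rw [Matrix.transpose_mul, Matrix.transpose_transpose]
  have hNtWW : Nᵀ * (W * Wᵀ) = 1 := by
    have h := congrArg Matrix.transpose huN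
    rwa [Matrix.transpose_mul, hWWsymm, Matrix.transpose_one] at h
  have hNsymm : Nᵀ = N := by
    calc Nᵀ = Nᵀ * (W * Wᵀ * N) := by rw [huN, Matrix.mul_one]
    _ = (Nᵀ * (W * Wᵀ)) * N := by rw [← Matrix.mul_assoc]
    _ = N := by rw [hNtWW, Matrix.one_mul]
  -- B := Wᵀ * N and its norm bound
  set B : Matrix (Fin r) (Fin q) ℝ := Wᵀ * N with hB
  have hBtB : Bᵀ * B = N := by
    rw [hB, Matrix.transpose_mul, Matrix.transpose_transpose, hNsymm]
    calc N * W * (Wᵀ * N) = N * (W * Wᵀ) * N := by simp only [Matrix.mul_assoc]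
    _ = N := by rw [hNu, Matrix.one_mul]
  have hBnorm : ‖B‖ ≤ 1 / Real.sqrt (1 - sinθ ^ 2) := by
    have hB2 : ‖B‖ * ‖B‖ ≤ (1 - sinθ ^ 2)⁻¹ := by
      rw [← l2_norm_transpose_mul_self, hBtB]; exact hNnorm
    rw [show (1:ℝ) / Real.sqrt (1 - sinθ ^ 2) = Real.sqrt ((1 - sinθ ^ 2)⁻¹) by
      rw [Real.sqrt_inv]; ring]
    rw [show ‖B‖ = Real.sqrt (‖B‖ ^ 2) by rw [Real.sqrt_sq (norm_nonneg B)]]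
    apply Real.sqrt_le_sqrt
    nlinarith
  -- key algebraic identities
  have hPXV : P * (Xstar * V₀) = -(P * (H * V₀)) := by
    have h0 : P * ((Xstar + H) * V₀) = 0 := by
      rw [hP, Matrix.sub_mul, Matrix.one_mul, hspan, sub_self]
    rw [Matrix.add_mul, Matrix.mul_add] at h0
    exact eq_neg_of_add_eq_zero_left h0
  have hXV : Xstar * V₀ = Ustar * Sstar * W := by
    rw [hXstar, hW]; simp only [Matrix.mul_assoc]
  have hXQ : Xstar * Q = Ustar * Sstar * C := by
    rw [hXstar, hC]; simp only [Matrix.mul_assoc]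
  have hUS : P * (Ustar * Sstar) = P * (Xstar * V₀) * B := by
    rw [hXV, hB]
    simp only [Matrix.mul_assoc]
    rw [hWWN, Matrix.mul_one]
  have hT : P * Xstar * Q = -(P * (H * V₀)) * B * C := by
    calc P * Xstar * Q = P * (Xstar * Q) := Matrix.mul_assoc _ _ _
    _ = P * (Ustar * Sstar * C) := by rw [hXQ]
    _ = (P * (Ustar * Sstar)) * C := by simp only [Matrix.mul_assoc]
    _ = (P * (Xstar * V₀) * B) * C := by rw [hUS]
    _ = -(P * (H * V₀)) * B * C := by rw [hPXV]
  have hPle : ‖P‖ ≤ 1 := l2_norm_proj_le_one P hPsymm hPidem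
  have hV₀le : ‖V₀‖ ≤ 1 := l2_norm_le_one_of_orth V₀ hV₀
  have hPHV : ‖P * (H * V₀)‖ ≤ ‖H‖ := by
    calc ‖P * (H * V₀)‖ ≤ ‖P‖ * ‖H * V₀‖ := Matrix.l2_opNorm_mul _ _
    _ ≤ 1 * ‖H * V₀‖ := mul_le_mul_of_nonneg_right hPle (norm_nonneg _)
    _ = ‖H * V₀‖ := one_mul _
    _ ≤ ‖H‖ * ‖V₀‖ := Matrix.l2_opNorm_mul _ _
    _ ≤ ‖H‖ * 1 := mul_le_mul_of_nonneg_left hV₀le (norm_nonneg _)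
    _ = ‖H‖ := mul_one _
  rw [specNorm_eq_l2, specNorm_eq_l2, hT]
  have hneg : -(P * (H * V₀)) * B * C = -((P * (H * V₀)) * B * C) := by
    simp only [Matrix.neg_mul]
  rw [hneg, norm_neg]
  calc ‖P * (H * V₀) * B * C‖ ≤ ‖P * (H * V₀) * B‖ * ‖C‖ := Matrix.l2_opNorm_mul _ _
  _ ≤ (‖P * (H * V₀)‖ * ‖B‖) * ‖C‖ :=
      mul_le_mul_of_nonneg_right (Matrix.l2_opNorm_mul _ _) (norm_nonneg _)
  _ = ‖P * (H * V₀)‖ * ‖B‖ * sinθ := by rw [hsC]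
  _ ≤ ‖H‖ * (1 / Real.sqrt (1 - sinθ ^ 2)) * sinθ := by
      apply mul_le_mul_of_nonneg_right _ hs0
      exact mul_le_mul hPHV hBnorm (norm_nonneg B) (norm_nonneg H)
  _ = ‖H‖ * sinθ / Real.sqrt (1 - sinθ ^ 2) := by ring
end

section
/- Let U₁ ∈ ℝ^{n×r} and V₀ ∈ ℝ^{m×r} have orthonormal columns, write P = U₁U₁ᵀ and Q = V₀V₀ᵀ, and let Z, X* ∈ ℝ^{n×m} be arbitrary. Define Y₁ = PZ + ZQ − PZQ. Then ‖Y₁ − X*‖_F² = ‖Z − X*‖_F² − ‖(I−P)(Z−X*)(I−Q)‖_F² + ‖(I−P)X*(I−Q)‖_F²; in particular ‖Y₁ − X*‖_F² ≤ ‖Z − X*‖_F² + ‖(I−P)X*(I−Q)‖_F². -/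
open Matrix

/-- The Frobenius norm of a real matrix. -/
noncomputable def frobNorm {n m : ℕ} (A : Matrix (Fin n) (Fin m) ℝ) : ℝ :=
  Real.sqrt (∑ i, ∑ j, (A i j) ^ 2)

lemma frobNorm_sq_eq_trace {n m : ℕ} (A : Matrix (Fin n) (Fin m) ℝ) :
    frobNorm A ^ 2 = Matrix.trace (Aᵀ * A) := by
  have hnn : (0:ℝ) ≤ ∑ i, ∑ j, (A i j) ^ 2 :=
    Finset.sum_nonneg fun i _ => Finset.sum_nonneg fun j _ => sq_nonneg _
  rw [frobNorm, Real.sq_sqrt hnn, Matrix.trace]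
  simp only [Matrix.diag, Matrix.mul_apply, Matrix.transpose_apply]
  rw [Finset.sum_comm]
  simp [sq]

lemma trace_symm {n m : ℕ} (X Y : Matrix (Fin n) (Fin m) ℝ) :
    Matrix.trace (Xᵀ * Y) = Matrix.trace (Yᵀ * X) := by
  rw [← Matrix.trace_transpose (Xᵀ * Y), Matrix.transpose_mul, Matrix.transpose_transpose]

lemma key_trace {n m : ℕ} (R : Matrix (Fin n) (Fin n) ℝ) (S : Matrix (Fin m) (Fin m) ℝ)
    (hRR : R * R = R) (hSS : S * S = S) (hRT : Rᵀ = R) (hST : Sᵀ = S)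
    (E M : Matrix (Fin n) (Fin m) ℝ) :
    Matrix.trace (Eᵀ * (R * M * S)) = Matrix.trace ((R * E * S)ᵀ * (R * M * S)) := by
  have hRt : (R * E * S)ᵀ = S * Eᵀ * R := by
    rw [Matrix.transpose_mul, Matrix.transpose_mul, hRT, hST, Matrix.mul_assoc]
  rw [hRt]
  have hR2 : ∀ X : Matrix (Fin n) (Fin m) ℝ, R * (R * X) = R * X := fun X => by
    rw [← Matrix.mul_assoc, hRR]
  simp only [Matrix.mul_assoc]
  rw [hR2, Matrix.trace_mul_comm S]
  simp only [Matrix.mul_assoc]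
  rw [hSS]

lemma decomp_trace {n m : ℕ} (E A B : Matrix (Fin n) (Fin m) ℝ)
    (hEA : Matrix.trace (Eᵀ * A) = Matrix.trace (Aᵀ * A))
    (hEB : Matrix.trace (Eᵀ * B) = Matrix.trace (Aᵀ * B)) :
    Matrix.trace ((E - (A + B))ᵀ * (E - (A + B))) =
      Matrix.trace (Eᵀ * E) - Matrix.trace (Aᵀ * A) + Matrix.trace (Bᵀ * B) := by
  have hAE := trace_symm A E
  have hBE := trace_symm B E
  have hBA := trace_symm B A
  simp only [Matrix.transpose_sub, Matrix.transpose_add, Matrix.sub_mul, Matrix.mul_sub,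
    Matrix.add_mul, Matrix.mul_add, Matrix.trace_sub, Matrix.trace_add]
  linarith

/-- **Error decomposition for the tangent-space projection.** With orthogonal
projectors `P = U₁U₁ᵀ` and `Q = V₀V₀ᵀ` and `Y₁ = PZ + ZQ − PZQ`, the squared
Frobenius error satisfies
`‖Y₁ − X*‖² = ‖Z − X*‖² − ‖(I−P)(Z−X*)(I−Q)‖² + ‖(I−P)X*(I−Q)‖²`, and in
particular `‖Y₁ − X*‖² ≤ ‖Z − X*‖² + ‖(I−P)X*(I−Q)‖²`. -/
theorem tangent_projection_error_decomposition
    {n m r : ℕ}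
    (U₁ : Matrix (Fin n) (Fin r) ℝ) (hU₁ : U₁ᵀ * U₁ = 1)
    (V₀ : Matrix (Fin m) (Fin r) ℝ) (hV₀ : V₀ᵀ * V₀ = 1)
    (P : Matrix (Fin n) (Fin n) ℝ) (hP : P = U₁ * U₁ᵀ)
    (Q : Matrix (Fin m) (Fin m) ℝ) (hQ : Q = V₀ * V₀ᵀ)
    (Z Xstar : Matrix (Fin n) (Fin m) ℝ)
    (Y₁ : Matrix (Fin n) (Fin m) ℝ) (hY₁ : Y₁ = P * Z + Z * Q - P * Z * Q) :
    frobNorm (Y₁ - Xstar) ^ 2 =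
        frobNorm (Z - Xstar) ^ 2
          - frobNorm ((1 - P) * (Z - Xstar) * (1 - Q)) ^ 2
          + frobNorm ((1 - P) * Xstar * (1 - Q)) ^ 2 ∧
      frobNorm (Y₁ - Xstar) ^ 2 ≤
        frobNorm (Z - Xstar) ^ 2 + frobNorm ((1 - P) * Xstar * (1 - Q)) ^ 2 := by
  have hPP : P * P = P := by
    rw [hP, Matrix.mul_assoc, ← Matrix.mul_assoc U₁ᵀ, hU₁, Matrix.one_mul]
  have hQQ : Q * Q = Q := by
    rw [hQ, Matrix.mul_assoc, ← Matrix.mul_assoc V₀ᵀ, hV₀, Matrix.one_mul]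
  have hPT : Pᵀ = P := by rw [hP, Matrix.transpose_mul, Matrix.transpose_transpose]
  have hQT : Qᵀ = Q := by rw [hQ, Matrix.transpose_mul, Matrix.transpose_transpose]
  have hRR : (1 - P) * (1 - P) = 1 - P := by
    rw [Matrix.mul_sub, Matrix.sub_mul, Matrix.sub_mul, hPP, Matrix.one_mul,
      Matrix.one_mul, Matrix.mul_one]
    abel
  have hSS : (1 - Q) * (1 - Q) = 1 - Q := by
    rw [Matrix.mul_sub, Matrix.sub_mul, Matrix.sub_mul, hQQ, Matrix.one_mul,
      Matrix.one_mul, Matrix.mul_one]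
    abel
  have hRT : (1 - P)ᵀ = 1 - P := by rw [Matrix.transpose_sub, Matrix.transpose_one, hPT]
  have hST : (1 - Q)ᵀ = 1 - Q := by rw [Matrix.transpose_sub, Matrix.transpose_one, hQT]
  have hAB : (1 - P) * (Z - Xstar) * (1 - Q) + (1 - P) * Xstar * (1 - Q)
      = (1 - P) * Z * (1 - Q) := by
    rw [← Matrix.add_mul, ← Matrix.mul_add, sub_add_cancel]
  have hYX : Y₁ - Xstar = (Z - Xstar) -
      ((1 - P) * (Z - Xstar) * (1 - Q) + (1 - P) * Xstar * (1 - Q)) := by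
    rw [hAB, hY₁]
    simp only [Matrix.sub_mul, Matrix.mul_sub, Matrix.one_mul, Matrix.mul_one]
    abel
  have hEA := key_trace (1 - P) (1 - Q) hRR hSS hRT hST (Z - Xstar) (Z - Xstar)
  have hEB := key_trace (1 - P) (1 - Q) hRR hSS hRT hST (Z - Xstar) Xstar
  have hAE := trace_symm ((1 - P) * (Z - Xstar) * (1 - Q)) (Z - Xstar)
  have hBE := trace_symm ((1 - P) * Xstar * (1 - Q)) (Z - Xstar)
  have hBA := trace_symm ((1 - P) * Xstar * (1 - Q)) ((1 - P) * (Z - Xstar) * (1 - Q))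
  have hmain : frobNorm (Y₁ - Xstar) ^ 2 =
      frobNorm (Z - Xstar) ^ 2
        - frobNorm ((1 - P) * (Z - Xstar) * (1 - Q)) ^ 2
        + frobNorm ((1 - P) * Xstar * (1 - Q)) ^ 2 := by
    rw [hYX, frobNorm_sq_eq_trace, frobNorm_sq_eq_trace, frobNorm_sq_eq_trace,
      frobNorm_sq_eq_trace]
    exact decomp_trace _ _ _ hEA hEB
  refine ⟨hmain, ?_⟩
  rw [hmain]
  linarith [sq_nonneg (frobNorm ((1 - P) * (Z - Xstar) * (1 - Q)))]
end

section
/- Let U₁ ∈ ℝ^{n×r}, V₀ ∈ ℝ^{m×r} and V₁ ∈ ℝ^{m×r} have orthonormal columns, and let Z, X* ∈ ℝ^{n×m} satisfy (I − U₁U₁ᵀ)ZV₀V₀ᵀ = 0 and U₁U₁ᵀZ(I − V₁V₁ᵀ) = 0. Then ‖U₁U₁ᵀ X* (I − V₁V₁ᵀ)‖_F² + ‖(I − U₁U₁ᵀ) X* V₀V₀ᵀ‖_F² ≤ ‖Z − X*‖_F². -/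
open Matrix

namespace MPBaux

/-- Squared Frobenius norm. -/
def f {n m : ℕ} (A : Matrix (Fin n) (Fin m) ℝ) : ℝ := ∑ i, ∑ j, (A i j) ^ 2

lemma f_nonneg {n m : ℕ} (A : Matrix (Fin n) (Fin m) ℝ) : 0 ≤ f A := by
  unfold f; positivity

lemma frobNorm_sq {n m : ℕ} (A : Matrix (Fin n) (Fin m) ℝ) : frobNorm A ^ 2 = f A := by
  unfold frobNorm
  exact Real.sq_sqrt (f_nonneg A)

lemma f_neg {n m : ℕ} (A : Matrix (Fin n) (Fin m) ℝ) : f (-A) = f A := by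
  unfold f; simp

lemma f_transpose {n m : ℕ} (A : Matrix (Fin n) (Fin m) ℝ) : f Aᵀ = f A := by
  unfold f
  rw [Finset.sum_comm]
  rfl

lemma f_eq_trace {n m : ℕ} (A : Matrix (Fin n) (Fin m) ℝ) : f A = trace (Aᵀ * A) := by
  unfold f trace Matrix.diag
  rw [Finset.sum_comm]
  congr 1
  ext i
  simp [Matrix.mul_apply, sq]

lemma split_left {n m : ℕ} (P : Matrix (Fin n) (Fin n) ℝ)
    (hPt : Pᵀ = P) (hPP : P * P = P) (A : Matrix (Fin n) (Fin m) ℝ) :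
    f (P * A) + f ((1 - P) * A) = f A := by
  have hQt : (1 - P)ᵀ = 1 - P := by rw [transpose_sub, transpose_one, hPt]
  have hQQ : (1 - P) * (1 - P) = 1 - P := by
    simp [Matrix.mul_sub, Matrix.sub_mul, hPP]
  have h1 : (P * A)ᵀ * (P * A) = Aᵀ * (P * A) := by
    rw [transpose_mul, hPt, Matrix.mul_assoc, ← Matrix.mul_assoc P P A, hPP]
  have h2 : ((1 - P) * A)ᵀ * ((1 - P) * A) = Aᵀ * ((1 - P) * A) := by
    rw [transpose_mul, hQt, Matrix.mul_assoc, ← Matrix.mul_assoc (1 - P) (1 - P) A, hQQ]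
  rw [f_eq_trace, f_eq_trace, f_eq_trace, h1, h2, ← trace_add, ← Matrix.mul_add]
  congr 2
  rw [Matrix.sub_mul, Matrix.one_mul]
  abel

lemma split_right {n m : ℕ} (Q : Matrix (Fin m) (Fin m) ℝ)
    (hQt : Qᵀ = Q) (hQQ : Q * Q = Q) (A : Matrix (Fin n) (Fin m) ℝ) :
    f (A * Q) + f (A * (1 - Q)) = f A := by
  have h1 : f (A * Q) = f (Q * Aᵀ) := by
    rw [← f_transpose (A * Q), transpose_mul, hQt]
  have h2 : f (A * (1 - Q)) = f ((1 - Q) * Aᵀ) := by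
    rw [← f_transpose (A * (1 - Q)), transpose_mul, transpose_sub, transpose_one, hQt]
  rw [h1, h2, split_left Q hQt hQQ Aᵀ, f_transpose]

lemma f_mul_right_le {n m : ℕ} (Q : Matrix (Fin m) (Fin m) ℝ)
    (hQt : Qᵀ = Q) (hQQ : Q * Q = Q) (A : Matrix (Fin n) (Fin m) ℝ) :
    f (A * Q) ≤ f A := by
  have := split_right Q hQt hQQ A
  nlinarith [f_nonneg (A * (1 - Q))]

lemma f_mul_right_le' {n m : ℕ} (Q : Matrix (Fin m) (Fin m) ℝ)
    (hQt : Qᵀ = Q) (hQQ : Q * Q = Q) (A : Matrix (Fin n) (Fin m) ℝ) :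
    f (A * (1 - Q)) ≤ f A := by
  have := split_right Q hQt hQQ A
  nlinarith [f_nonneg (A * Q)]

end MPBaux

open MPBaux in
/-- If the column space of `ZV₀` lies in the range of `U₁` and the row space
of `U₁ᵀZ` lies in the range of `V₁ᵀ`, then
`‖U₁U₁ᵀ X* (I − V₁V₁ᵀ)‖² + ‖(I − U₁U₁ᵀ) X* V₀V₀ᵀ‖² ≤ ‖Z − X*‖²`
in the Frobenius norm. -/
theorem mixed_projection_bound
    {n m r : ℕ}
    (U₁ : Matrix (Fin n) (Fin r) ℝ) (hU₁ : U₁ᵀ * U₁ = 1)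
    (V₀ V₁ : Matrix (Fin m) (Fin r) ℝ) (hV₀ : V₀ᵀ * V₀ = 1) (hV₁ : V₁ᵀ * V₁ = 1)
    (Z Xstar : Matrix (Fin n) (Fin m) ℝ)
    (hZ₁ : (1 - U₁ * U₁ᵀ) * Z * (V₀ * V₀ᵀ) = 0)
    (hZ₂ : U₁ * U₁ᵀ * Z * (1 - V₁ * V₁ᵀ) = 0) :
    frobNorm (U₁ * U₁ᵀ * Xstar * (1 - V₁ * V₁ᵀ)) ^ 2
        + frobNorm ((1 - U₁ * U₁ᵀ) * Xstar * (V₀ * V₀ᵀ)) ^ 2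
      ≤ frobNorm (Z - Xstar) ^ 2 := by
  set P : Matrix (Fin n) (Fin n) ℝ := U₁ * U₁ᵀ with hPdef
  set Q₀ : Matrix (Fin m) (Fin m) ℝ := V₀ * V₀ᵀ with hQ₀def
  set Q₁ : Matrix (Fin m) (Fin m) ℝ := V₁ * V₁ᵀ with hQ₁def
  set E : Matrix (Fin n) (Fin m) ℝ := Z - Xstar with hEdef
  have hPt : Pᵀ = P := by rw [hPdef, transpose_mul, transpose_transpose]
  have hPP : P * P = P := by
    rw [hPdef, Matrix.mul_assoc, ← Matrix.mul_assoc U₁ᵀ U₁, hU₁, Matrix.one_mul]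
  have hQ₀t : Q₀ᵀ = Q₀ := by rw [hQ₀def, transpose_mul, transpose_transpose]
  have hQ₀Q₀ : Q₀ * Q₀ = Q₀ := by
    rw [hQ₀def, Matrix.mul_assoc, ← Matrix.mul_assoc V₀ᵀ V₀, hV₀, Matrix.one_mul]
  have hQ₁t : Q₁ᵀ = Q₁ := by rw [hQ₁def, transpose_mul, transpose_transpose]
  have hQ₁Q₁ : Q₁ * Q₁ = Q₁ := by
    rw [hQ₁def, Matrix.mul_assoc, ← Matrix.mul_assoc V₁ᵀ V₁, hV₁, Matrix.one_mul]
  -- rewrite the Xstar terms via E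
  have key1 : P * Xstar * (1 - Q₁) = -(P * E * (1 - Q₁)) := by
    have : P * E * (1 - Q₁) = P * Z * (1 - Q₁) - P * Xstar * (1 - Q₁) := by
      rw [hEdef]; simp only [Matrix.mul_sub, Matrix.sub_mul, Matrix.mul_one, Matrix.one_mul]; try abel
    rw [this, hZ₂, zero_sub, neg_neg]
  have key2 : (1 - P) * Xstar * Q₀ = -((1 - P) * E * Q₀) := by
    have : (1 - P) * E * Q₀ = (1 - P) * Z * Q₀ - (1 - P) * Xstar * Q₀ := by
      rw [hEdef]; simp only [Matrix.mul_sub, Matrix.sub_mul, Matrix.mul_one, Matrix.one_mul]; try abel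
    rw [this, hZ₁, zero_sub, neg_neg]
  rw [frobNorm_sq, frobNorm_sq, frobNorm_sq, key1, key2, f_neg, f_neg]
  have h1 : f (P * E * (1 - Q₁)) ≤ f (P * E) := f_mul_right_le' Q₁ hQ₁t hQ₁Q₁ (P * E)
  have h2 : f ((1 - P) * E * Q₀) ≤ f ((1 - P) * E) := f_mul_right_le Q₀ hQ₀t hQ₀Q₀ ((1 - P) * E)
  have h3 : f (P * E) + f ((1 - P) * E) = f E := split_left P hPt hPP E
  linarith
end

section
/- Let 0 < s < 1, 0 ≤ q₀ ≤ 1, 0 < p₀, and let (p_k)_{k≥0}, (q_k)_{k≥0} be sequences of nonnegative reals with these initial values such that for all k: 0 ≤ q_{k+1} ≤ s p_k, 1 − q_k − q_{k+1} > 0, and p_{k+1} ≤ s p_k + (s p_k − q_{k+1}) q_k / (1 − q_k − q_{k+1}). Assume 4 p₀ s / ((1−q₀)² (1−s)) < 1 and define c* = (p₀/(1−q₀)) (s/(1−s)) · 2/(1 + √(1 − 4 p₀ s/((1−q₀)²(1−s)))). Then 0 < c* ≤ 1 − q₀, and for every k: p_k ≤ (p₀/c*) s^k and c* ≤ 1 −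 Σ_{j=0}^{k} q_j. -/
set_option maxHeartbeats 1600000 in
/-- **Convergence of the recursive inequality scheme.** Given nonnegative
sequences `p`, `q` satisfying the recursive inequalities of the projected
fixed-point iteration, and the discriminant condition
`4 p₀ s / ((1−q₀)²(1−s)) < 1`, the sequence `p` decays linearly:
`p k ≤ (p₀/c*) sᵏ`, with `0 < c* ≤ 1 − Σ_{j≤k} q j`. -/
theorem pq_sequence_estimate
    (s : ℝ) (hs0 : 0 < s) (hs1 : s < 1)
    (p q : ℕ → ℝ)
    (hp : ∀ k, 0 ≤ p k) (hq : ∀ k, 0 ≤ q k)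
    (hq0 : q 0 ≤ 1) (hp0 : 0 < p 0)
    (hqrec : ∀ k, q (k + 1) ≤ s * p k)
    (hqden : ∀ k, 0 < 1 - q k - q (k + 1))
    (hprec : ∀ k,
      p (k + 1) ≤ s * p k + (s * p k - q (k + 1)) * q k / (1 - q k - q (k + 1)))
    (hdisc : 4 * p 0 * s / ((1 - q 0) ^ 2 * (1 - s)) < 1)
    (cstar : ℝ)
    (hcstar : cstar = p 0 / (1 - q 0) * (s / (1 - s)) *
      (2 / (1 + Real.sqrt (1 - 4 * p 0 * s / ((1 - q 0) ^ 2 * (1 - s)))))) :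
    0 < cstar ∧ cstar ≤ 1 - q 0 ∧
      ∀ k, p k ≤ p 0 / cstar * s ^ k ∧
        cstar ≤ 1 - ∑ j ∈ Finset.range (k + 1), q j := by
  -- every q k is < 1
  have hqlt : ∀ k, q k < 1 := fun k => by
    have h := hqden k; have h2 := hq (k + 1); linarith
  have h1q0 : 0 < 1 - q 0 := by linarith [hqlt 0]
  have h1s : 0 < 1 - s := by linarith
  set D : ℝ := 4 * p 0 * s / ((1 - q 0) ^ 2 * (1 - s)) with hDdef
  have hden : 0 < (1 - q 0) ^ 2 * (1 - s) := by positivity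
  have hDpos : 0 < D := by
    rw [hDdef]; exact div_pos (by positivity) hden
  have hDlt : D < 1 := hdisc
  have h1D : 0 ≤ 1 - D := by linarith
  set r : ℝ := Real.sqrt (1 - D) with hrdef
  have hr0 : 0 ≤ r := Real.sqrt_nonneg _
  have hr2 : r ^ 2 = 1 - D := Real.sq_sqrt h1D
  have hr1 : r < 1 := by nlinarith
  have h1r : (0:ℝ) < 1 + r := by linarith
  have hDid : D * ((1 - q 0) ^ 2 * (1 - s)) = 4 * p 0 * s := by
    rw [hDdef]; field_simp
  clear_value r
  clear_value D
  have hc2 : cstar = (1 - q 0) * (1 - r) / 2 := by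
    rw [hcstar]
    field_simp
    linear_combination ((1 - s) + q 0 * (s - 1) * (2 - q 0)) * hr2 - hDid
  have hcpos : 0 < cstar := by
    have h1 : 0 < 1 - r := by linarith
    rw [hc2]; positivity
  have hcle2 : cstar ≤ (1 - q 0) / 2 := by
    rw [hc2]; nlinarith
  have hB : 0 < 1 - q 0 - cstar := by linarith
  have hBc : (1 - q 0 - cstar) * (1 - s) * cstar = p 0 * s := by
    rw [hc2]
    linear_combination (-(1 - q 0) ^ 2 * (1 - s) / 4) * hr2 + (1 / 4) * hDid
  -- product positivity and Weierstrass inequality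
  have prodpos : ∀ m, 0 < ∏ j ∈ Finset.range m, (1 - q j) :=
    fun m => Finset.prod_pos fun j _ => by linarith [hqlt j]
  have weier : ∀ m, 1 - ∑ j ∈ Finset.range m, q j ≤ ∏ j ∈ Finset.range m, (1 - q j) := by
    intro m
    induction m with
    | zero => simp
    | succ n ih =>
      rw [Finset.sum_range_succ, Finset.prod_range_succ]
      have h1 : 0 ≤ 1 - q n := by linarith [hqlt n]
      have h2 : 0 ≤ ∑ j ∈ Finset.range n, q j := Finset.sum_nonneg fun j _ => hq j
      nlinarith [mul_le_mul_of_nonneg_right ih h1, mul_nonneg h2 (hq n)]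
  -- main induction: p-bound with product denominator, and partial-sum bound
  have main : ∀ k, p k ≤ p 0 * s ^ k / ∏ j ∈ Finset.range k, (1 - q j) ∧
      ∑ j ∈ Finset.range (k + 1), q j ≤ q 0 + (1 - q 0 - cstar) * (1 - s ^ k) := by
    intro k
    induction k with
    | zero =>
      constructor
      · simp
      · simp
    | succ k ih =>
      obtain ⟨ih1, ih2⟩ := ih
      have hsk : (0:ℝ) < s ^ k := pow_pos hs0 k
      have hPipos := prodpos k
      have hsumk : 0 ≤ ∑ j ∈ Finset.range k, q j := Finset.sum_nonneg fun j _ => hq j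
      have hsub : ∑ j ∈ Finset.range k, q j ≤ ∑ j ∈ Finset.range (k + 1), q j := by
        rw [Finset.sum_range_succ]; linarith [hq k]
      have hqk_le : q k ≤ ∑ j ∈ Finset.range (k + 1), q j := by
        rw [Finset.sum_range_succ]; linarith
      have hPige : cstar + (1 - q 0 - cstar) * s ^ k ≤ ∏ j ∈ Finset.range k, (1 - q j) := by
        have h1 := weier k
        have h2 : (1 - q 0 - cstar) * (1 - s ^ k) = (1 - q 0 - cstar) - (1 - q 0 - cstar) * s ^ k := by ring
        linarith [ih2]
      have hPic : cstar ≤ ∏ j ∈ Finset.range k, (1 - q j) := by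
        nlinarith [mul_nonneg hB.le hsk.le]
      have hpk' : p k ≤ p 0 * s ^ k / cstar := by
        refine le_trans ih1 ?_
        gcongr
      have hspk : s * p k ≤ (1 - q 0 - cstar) * (1 - s) * s ^ k := by
        have h1 : s * p k ≤ s * (p 0 * s ^ k / cstar) :=
          mul_le_mul_of_nonneg_left hpk' hs0.le
        have h2 : s * (p 0 * s ^ k / cstar) = (1 - q 0 - cstar) * (1 - s) * s ^ k := by
          rw [mul_div_assoc', div_eq_iff hcpos.ne']
          linear_combination (-(s ^ k)) * hBc
        linarith
      have hq1k : q (k + 1) ≤ (1 - q 0 - cstar) * (1 - s) * s ^ k :=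
        le_trans (hqrec k) hspk
      constructor
      · -- p part
        have h1qk : 0 < 1 - q k := by linarith [hqlt k]
        have hspk1 : s * p k ≤ 1 - q k := by
          have hBs : (1 - q 0 - cstar) * (1 - s) * s ^ k ≤ (1 - q 0 - cstar) * s ^ k := by
            nlinarith [mul_nonneg hB.le hsk.le]
          have h1qk' : cstar + (1 - q 0 - cstar) * s ^ k ≤ 1 - q k := by
            have h2 : (1 - q 0 - cstar) * (1 - s ^ k) = (1 - q 0 - cstar) - (1 - q 0 - cstar) * s ^ k := by ring
            linarith [ih2, hqk_le]
          linarith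
        have hd := hqden k
        have hstep : p (k + 1) ≤ s * p k / (1 - q k) := by
          have h3 : (s * p k - q (k + 1)) * q k / (1 - q k - q (k + 1)) ≤
              s * p k * q k / (1 - q k) := by
            rw [div_le_div_iff₀ hd h1qk]
            nlinarith [mul_nonneg (mul_nonneg (hq k) (hq (k + 1))) (sub_nonneg.mpr hspk1)]
          have h4 : s * p k + s * p k * q k / (1 - q k) = s * p k / (1 - q k) := by
            field_simp; ring
          linarith [hprec k]
        calc p (k + 1) ≤ s * p k / (1 - q k) := hstep
          _ ≤ s * (p 0 * s ^ k / ∏ j ∈ Finset.range k, (1 - q j)) / (1 - q k) := by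
              gcongr
          _ = p 0 * s ^ (k + 1) / ∏ j ∈ Finset.range (k + 1), (1 - q j) := by
              rw [Finset.prod_range_succ, pow_succ]
              field_simp
      · -- sum part
        rw [Finset.sum_range_succ]
        have key : q 0 + (1 - q 0 - cstar) * (1 - s ^ k) + (1 - q 0 - cstar) * (1 - s) * s ^ k
            = q 0 + (1 - q 0 - cstar) * (1 - s ^ (k + 1)) := by
          rw [pow_succ]; ring
        linarith [ih2, hq1k]
  -- finish
  have hPic : ∀ k, cstar ≤ ∏ j ∈ Finset.range k, (1 - q j) := by
    intro k
    have h1 := weier k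
    have h2 : ∑ j ∈ Finset.range k, q j ≤ ∑ j ∈ Finset.range (k + 1), q j := by
      rw [Finset.sum_range_succ]; linarith [hq k]
    have h3 := (main k).2
    have h4 : (1 - q 0 - cstar) * (1 - s ^ k) ≤ 1 - q 0 - cstar := by
      nlinarith [mul_nonneg hB.le (pow_pos hs0 k).le]
    linarith
  refine ⟨hcpos, by linarith, fun k => ⟨?_, ?_⟩⟩
  · have h1 := (main k).1
    have hPipos := prodpos k
    have hsk : (0:ℝ) < s ^ k := pow_pos hs0 k
    have h5 : p 0 * s ^ k / (∏ j ∈ Finset.range k, (1 - q j)) ≤ p 0 * s ^ k / cstar := by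
      gcongr
      exact hPic k
    have h6 : p 0 * s ^ k / cstar = p 0 / cstar * s ^ k := by ring
    linarith
  · have h3 := (main k).2
    have h4 : (1 - q 0 - cstar) * (1 - s ^ k) ≤ 1 - q 0 - cstar := by
      nlinarith [mul_nonneg hB.le (pow_pos hs0 k).le]
    linarith
end

section
/- Let q₀, q₁, …, q_{k+1} be nonnegative real numbers with q_j < 1 for each j and Σ_{j=0}^{k+1} q_j < 1. Then ∏_{j=0}^{k} (1 − q_{j+1}/(1 − q_j)) ≥ 1 − Σ_{j=0}^{k+1} q_j. -/
private lemma prod_aux (k : ℕ) (q : ℕ → ℝ)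
    (hq0 : ∀ j ≤ k + 1, 0 ≤ q j)
    (hq1 : ∀ j ≤ k + 1, q j < 1)
    (hsum : ∑ j ∈ Finset.range (k + 2), q j < 1) :
    (1 - ∑ j ∈ Finset.range (k + 2), q j) / (1 - q 0) ≤
      ∏ j ∈ Finset.range (k + 1), (1 - q (j + 1) / (1 - q j)) := by
  induction k with
  | zero =>
      have h0' : (0:ℝ) < 1 - q 0 := by linarith [hq1 0 (by norm_num)]
      rw [Finset.prod_range_one, Finset.sum_range_succ, Finset.sum_range_one,
        div_le_iff₀ h0']
      field_simp
      linarith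
  | succ k ih =>
      have hq0' : ∀ j ≤ k + 1, 0 ≤ q j := fun j hj => hq0 j (by omega)
      have hq1' : ∀ j ≤ k + 1, q j < 1 := fun j hj => hq1 j (by omega)
      have hk2 : 0 ≤ q (k + 2) := hq0 (k+2) (by omega)
      have hk1 : 0 ≤ q (k + 1) := hq0 (k+1) (by omega)
      have eS2 : ∑ j ∈ Finset.range (k + 3), q j
          = ∑ j ∈ Finset.range (k + 2), q j + q (k + 2) :=
        Finset.sum_range_succ q (k+2)
      have hsum' : ∑ j ∈ Finset.range (k + 2), q j < 1 := by linarith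
      have ih' := ih hq0' hq1' hsum'
      have eS1 : ∑ j ∈ Finset.range (k + 2), q j
          = ∑ j ∈ Finset.range (k + 1), q j + q (k + 1) :=
        Finset.sum_range_succ q (k+1)
      have hS0 : 0 ≤ ∑ j ∈ Finset.range (k+1), q j :=
        Finset.sum_nonneg fun j hj => hq0 j (by simp at hj; omega)
      have h1 : (0:ℝ) < 1 - q (k+1) := by linarith [hq1 (k+1) (by omega)]
      have hq0pos : (0:ℝ) < 1 - q 0 := by linarith [hq1 0 (by omega)]
      have hcan : q (k+2) / (1 - q (k+1)) * (1 - q (k+1)) = q (k+2) :=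
        div_mul_cancel₀ _ (ne_of_gt h1)
      have hfpos : 0 ≤ 1 - q (k+2) / (1 - q (k+1)) := by
        rw [sub_nonneg, div_le_one h1]; linarith
      rw [Finset.prod_range_succ]
      calc (1 - ∑ j ∈ Finset.range (k + 3), q j) / (1 - q 0)
          ≤ (1 - ∑ j ∈ Finset.range (k + 2), q j) / (1 - q 0)
              * (1 - q (k+2) / (1 - q (k+1))) := by
            rw [div_mul_eq_mul_div, div_le_div_iff₀ hq0pos hq0pos]
            have hdivnn : 0 ≤ q (k+2) / (1 - q (k+1)) :=
              div_nonneg hk2 (le_of_lt h1)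
            have hkey : (1 - ∑ j ∈ Finset.range (k + 2), q j)
                * (q (k+2) / (1 - q (k+1))) ≤ q (k+2) := by
              have h2 := mul_le_mul_of_nonneg_left
                (show 1 - ∑ j ∈ Finset.range (k + 2), q j ≤ 1 - q (k+1) by
                  linarith) hdivnn
              nlinarith [hcan]
            have hkey2 : 1 - ∑ j ∈ Finset.range (k + 3), q j ≤
                (1 - ∑ j ∈ Finset.range (k + 2), q j)
                  * (1 - q (k+2) / (1 - q (k+1))) := by nlinarith [hkey]
            exact mul_le_mul_of_nonneg_right hkey2 hq0pos.le
        _ ≤ (∏ j ∈ Finset.range (k + 1), (1 - q (j + 1) / (1 - q j)))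
              * (1 - q (k+2) / (1 - q (k+1))) :=
            mul_le_mul_of_nonneg_right ih' hfpos

/-- For nonnegative reals `q₀, …, q_{k+1}` each less than `1` with total sum
less than `1`, the product `∏_{j=0}^{k} (1 − q_{j+1}/(1 − q_j))` is at least
`1 − Σ_{j=0}^{k+1} q_j`. -/
theorem prod_one_sub_ratio_ge
    (k : ℕ) (q : ℕ → ℝ)
    (hq0 : ∀ j ≤ k + 1, 0 ≤ q j)
    (hq1 : ∀ j ≤ k + 1, q j < 1)
    (hsum : ∑ j ∈ Finset.range (k + 2), q j < 1) :
    1 - ∑ j ∈ Finset.range (k + 2), q j ≤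
      ∏ j ∈ Finset.range (k + 1), (1 - q (j + 1) / (1 - q j)) := by
  have h := prod_aux k q hq0 hq1 hsum
  have hq0pos : (0:ℝ) < 1 - q 0 := by linarith [hq1 0 (by omega)]
  have h0 : 0 ≤ q 0 := hq0 0 (by omega)
  refine le_trans ?_ h
  rw [le_div_iff₀ hq0pos]
  nlinarith
end

section
/- Let 0 < δ < 1 with δ² + δ⁶ > 1, set d* = 1/√(1−δ²), and let q_max > 0 and s > 0 satisfy (1/(δ⁴d*²))(1 + q_max/(δ²d*²)) ≤ δ² − s/(δ²d*²). Let Ω = {(p,q) ∈ ℝ² : p ≥ 0, 0 ≤ q ≤ q_max, q ≤ s·p} and define f(p,q) = ((1 + δ²p)/(1 + q/(δ²d*²(1+p))) − 1, q/(δ⁴d*²(1+p))). Then f maps Ω into Ω. -/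
set_option maxHeartbeats 1000000 in
/-- **Invariance of the region Ω under the counter-example map `f`.**
Under the stated conditions on `δ`, `q_max` and `s`, the map
`f(p,q) = ((1+δ²p)/(1+q/(δ²d*²(1+p))) − 1, q/(δ⁴d*²(1+p)))`
maps the region `Ω = {(p,q) : p ≥ 0, 0 ≤ q ≤ q_max, q ≤ s·p}` into itself. -/
theorem counterexample_region_invariant
    (δ : ℝ) (hδ0 : 0 < δ) (hδ1 : δ < 1) (hδ6 : 1 < δ ^ 2 + δ ^ 6)
    (dstar : ℝ) (hdstar : dstar = 1 / Real.sqrt (1 - δ ^ 2))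
    (qmax s : ℝ) (hqmax : 0 < qmax) (hs : 0 < s)
    (hcond : (1 / (δ ^ 4 * dstar ^ 2)) * (1 + qmax / (δ ^ 2 * dstar ^ 2))
      ≤ δ ^ 2 - s / (δ ^ 2 * dstar ^ 2))
    (Ω : Set (ℝ × ℝ))
    (hΩ : Ω = {x : ℝ × ℝ | 0 ≤ x.1 ∧ 0 ≤ x.2 ∧ x.2 ≤ qmax ∧ x.2 ≤ s * x.1})
    (f : ℝ × ℝ → ℝ × ℝ)
    (hf : ∀ x : ℝ × ℝ, f x =
      ((1 + δ ^ 2 * x.1) / (1 + x.2 / (δ ^ 2 * dstar ^ 2 * (1 + x.1))) - 1,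
        x.2 / (δ ^ 4 * dstar ^ 2 * (1 + x.1)))) :
    ∀ x ∈ Ω, f x ∈ Ω := by
  have h1 : (0:ℝ) < 1 - δ ^ 2 := by nlinarith
  have he : dstar ^ 2 = 1 / (1 - δ ^ 2) := by
    rw [hdstar, div_pow, one_pow, Real.sq_sqrt h1.le]
  have hepos : 0 < dstar ^ 2 := by rw [he]; positivity
  set e := dstar ^ 2 with hE
  have heδ : e * (1 - δ ^ 2) = 1 := by rw [he]; field_simp
  clear_value e
  have hcpos : 0 < δ ^ 2 * e := by positivity
  have h1c : 1 < δ ^ 2 * (δ ^ 2 * e) := by nlinarith [sq_nonneg δ, hepos]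
  have hδ2 : (0:ℝ) < δ ^ 2 := by positivity
  have hene : e ≠ 0 := ne_of_gt hepos
  have hδne : δ ≠ 0 := ne_of_gt hδ0
  -- key polynomial form of hcond
  have hkey : δ ^ 2 * e + qmax ≤ (δ ^ 2 * e) * δ ^ 2 * (δ ^ 2 * (δ ^ 2 * e) - s) := by
    have h2 := mul_le_mul_of_nonneg_right hcond
      (mul_nonneg (mul_nonneg (pow_nonneg hδ0.le 4) hepos.le)
        (mul_nonneg hδ2.le hepos.le))
    have hL : (1 / (δ ^ 4 * e)) * (1 + qmax / (δ ^ 2 * e)) * ((δ ^ 4 * e) * (δ ^ 2 * e))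
        = δ ^ 2 * e + qmax := by field_simp; try ring
    have hR : (δ ^ 2 - s / (δ ^ 2 * e)) * ((δ ^ 4 * e) * (δ ^ 2 * e))
        = (δ ^ 2 * e) * δ ^ 2 * (δ ^ 2 * (δ ^ 2 * e) - s) := by field_simp; try ring
    rw [hL, hR] at h2
    exact h2
  have hslt : s < δ ^ 2 * (δ ^ 2 * e) := by
    nlinarith [hkey, hqmax, hcpos, hδ2, mul_pos hcpos hδ2]
  rintro ⟨p, q⟩ hx
  rw [hΩ] at hx ⊢
  simp only [Set.mem_setOf_eq] at hx
  obtain ⟨hp, hq0, hqm, hqs⟩ := hx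
  rw [hf]
  set A : ℝ := δ ^ 2 * e * (1 + p) with hA
  clear_value A
  have hp1 : (0:ℝ) < 1 + p := by linarith
  have hApos : 0 < A := by rw [hA]; exact mul_pos hcpos hp1
  have hAq : 0 < A + q := by linarith
  have hA1 : 1 ≤ δ ^ 2 * A := by
    have h3 : δ ^ 2 * (δ ^ 2 * e) ≤ δ ^ 2 * A := by
      rw [hA]; nlinarith [hδ2, hcpos]
    linarith
  have honep : 1 + q / A = (A + q) / A := by
    rw [add_div, div_self hApos.ne', add_comm]
  have hp' : (1 + δ ^ 2 * p) / (1 + q / A) - 1 = (δ ^ 2 * p * A - q) / (A + q) := by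
    rw [honep, div_div_eq_mul_div, div_sub_one hAq.ne']
    congr 1
    ring
  have hnum : 0 ≤ δ ^ 2 * p * A - q := by
    have h4 : s * p ≤ δ ^ 2 * p * A := by
      rw [hA]
      nlinarith [mul_nonneg hp (sub_nonneg.mpr hslt.le),
        mul_nonneg (mul_nonneg hp hp) (mul_pos hδ2 hcpos).le]
    linarith
  have hq'eq : q / (δ ^ 4 * e * (1 + p)) = q / (δ ^ 2 * A) := by
    rw [hA]; ring_nf
  simp only [Set.mem_setOf_eq]
  refine ⟨?_, ?_, ?_, ?_⟩
  · simp only [hp']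
    exact div_nonneg hnum hAq.le
  · have : (0:ℝ) ≤ q / (δ ^ 4 * e * (1 + p)) :=
      div_nonneg hq0 (mul_nonneg (mul_nonneg (pow_nonneg hδ0.le 4) hepos.le) hp1.le)
    simpa using this
  · have : q / (δ ^ 4 * e * (1 + p)) ≤ qmax := by
      rw [hq'eq]
      calc q / (δ ^ 2 * A) ≤ q := div_le_self hq0 hA1
        _ ≤ qmax := hqm
    simpa using this
  · have hmain : q * (A + q) ≤ s * (δ ^ 2 * p * A - q) * (δ ^ 2 * A) := by
      have step1 : q * (A + q) ≤ s * p * (1 + p) * (δ ^ 2 * e + qmax) := by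
        rw [hA]
        nlinarith [mul_le_mul hqs hqm hq0 (mul_nonneg hs.le hp),
          mul_le_mul_of_nonneg_right hqs (mul_nonneg hcpos.le hp1.le),
          mul_nonneg (mul_nonneg (mul_nonneg hs.le hp) hp) hqmax.le]
      have step2 : s * p * (1 + p) * (δ ^ 2 * e + qmax)
          ≤ s * p * (1 + p) * ((δ ^ 2 * e) * δ ^ 2 * (δ ^ 2 * (δ ^ 2 * e) - s)) :=
        mul_le_mul_of_nonneg_left hkey
          (by positivity)
      have step3 : s * p * (1 + p) * ((δ ^ 2 * e) * δ ^ 2 * (δ ^ 2 * (δ ^ 2 * e) - s))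
          ≤ s * (δ ^ 2 * p * A - q) * (δ ^ 2 * A) := by
        rw [hA]
        nlinarith [mul_le_mul_of_nonneg_left hqs
            (mul_nonneg (mul_nonneg (mul_nonneg hs.le hδ2.le) hcpos.le) hp1.le),
          mul_nonneg (mul_nonneg (mul_nonneg hs.le (mul_nonneg hδ2.le hδ2.le))
            (mul_nonneg (mul_nonneg hcpos.le hcpos.le) (mul_nonneg hp hp))) hp1.le]
      linarith
    have : q / (δ ^ 4 * e * (1 + p))
        ≤ s * ((1 + δ ^ 2 * p) / (1 + q / A) - 1) := by
      rw [hq'eq, hp', ← mul_div_assoc,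
        div_le_div_iff₀ (mul_pos hδ2 hApos) hAq]
      exact hmain
    simpa using this
end

section
/- Let 0 < δ < 1 with δ² + δ⁶ > 1, set d* = 1/√(1−δ²), and let q_max > 0 and s > 0 satisfy (1/(δ⁴d*²))(1 + q_max/(δ²d*²)) ≤ δ² − s/(δ²d*²). Let Ω = {(p,q) ∈ ℝ² : p ≥ 0, 0 ≤ q ≤ q_max, q ≤ s·p} and define f(p,q) = ((1 + δ²p)/(1 + q/(δ²d*²(1+p))) − 1, q/(δ⁴d*²(1+p))). Then for every x ∈ Ω, the iterates f^n(x) converge to (0, 0) as n → ∞. -/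
open Filter


lemma counterexample_arith (t c s qmax p q : ℝ) (ht : 0 < t) (hc : 0 < c)
    (hs : 0 < s) (hqmax : 0 < qmax)
    (hK : c + qmax + s * (t * c) ≤ t ^ 2 * c ^ 2)
    (hp : 0 ≤ p) (hq : 0 ≤ q) (hqm : q ≤ qmax) (hqs : q ≤ s * p) :
    q * (c * (1 + p) + q) ≤ s * t * (c * (1 + p)) * (t * p * (c * (1 + p)) - q) := by
  have hA : 0 < c * (1 + p) := by nlinarith
  have h1 : 0 ≤ (s * p - q) * (c * (1 + p)) := mul_nonneg (by linarith) hA.le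
  have h2 : 0 ≤ q * (qmax - q) := mul_nonneg hq (by linarith)
  have h3 : 0 ≤ (s * p - q) * qmax := mul_nonneg (by linarith) hqmax.le
  have step2 : c * (1 + p) + qmax ≤ t * (c * (1 + p)) * (t * c - s) := by
    nlinarith [mul_nonneg hp (show (0:ℝ) ≤ t ^ 2 * c ^ 2 - c - s * (t * c) by nlinarith)]
  have h4 : 0 ≤ s * p * (t * (c * (1 + p)) * (t * c - s) - (c * (1 + p) + qmax)) :=
    mul_nonneg (mul_nonneg hs.le hp) (by linarith)
  have h5 : 0 ≤ s * t * (c * (1 + p)) * (s * p - q) :=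
    mul_nonneg (by positivity) (by linarith)
  have h6 : 0 ≤ s * t * (c * (1 + p)) * p * (t * (c * (1 + p)) - t * c) := by
    have : t * (c * (1 + p)) - t * c = t * c * p := by ring
    rw [this]; positivity
  nlinarith [h1, h2, h3, h4, h5, h6]

lemma counterexample_step (δ dstar qmax s : ℝ) (hδ0 : 0 < δ) (hδ1 : δ < 1)
    (hE : dstar ^ 2 * (1 - δ ^ 2) = 1) (hs : 0 < s) (hqmax : 0 < qmax)
    (hK : δ ^ 2 * dstar ^ 2 + qmax + s * (δ ^ 4 * dstar ^ 2)
      ≤ δ ^ 2 * (δ ^ 4 * dstar ^ 2) * (δ ^ 2 * dstar ^ 2))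
    (hb : 1 < δ ^ 4 * dstar ^ 2) (hslt : s < δ ^ 4 * dstar ^ 2)
    (p q : ℝ) (hp : 0 ≤ p) (hq : 0 ≤ q) (hqm : q ≤ qmax) (hqs : q ≤ s * p) :
    0 ≤ (1 + δ ^ 2 * p) / (1 + q / (δ ^ 2 * dstar ^ 2 * (1 + p))) - 1 ∧
    0 ≤ q / (δ ^ 4 * dstar ^ 2 * (1 + p)) ∧
    q / (δ ^ 4 * dstar ^ 2 * (1 + p)) ≤ qmax ∧
    q / (δ ^ 4 * dstar ^ 2 * (1 + p)) ≤
      s * ((1 + δ ^ 2 * p) / (1 + q / (δ ^ 2 * dstar ^ 2 * (1 + p))) - 1) ∧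
    (1 + δ ^ 2 * p) / (1 + q / (δ ^ 2 * dstar ^ 2 * (1 + p))) - 1 ≤ δ ^ 2 * p ∧
    q / (δ ^ 4 * dstar ^ 2 * (1 + p)) ≤ (1 / (δ ^ 4 * dstar ^ 2)) * q := by
  have hδ2 : (0:ℝ) < δ ^ 2 := by positivity
  have hd2 : (0:ℝ) < dstar ^ 2 := by nlinarith
  have hA : 0 < δ ^ 2 * dstar ^ 2 * (1 + p) := by
    have : (0:ℝ) < 1 + p := by linarith
    exact mul_pos (mul_pos hδ2 hd2) this
  have hdivA : 0 ≤ q / (δ ^ 2 * dstar ^ 2 * (1 + p)) := div_nonneg hq hA.le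
  have hD : 0 < 1 + q / (δ ^ 2 * dstar ^ 2 * (1 + p)) := by linarith
  have hB : 0 < δ ^ 4 * dstar ^ 2 * (1 + p) := by
    have : δ ^ 4 * dstar ^ 2 = δ ^ 2 * (δ ^ 2 * dstar ^ 2) := by ring
    nlinarith
  have hbpos : (0:ℝ) < δ ^ 4 * dstar ^ 2 := by linarith
  have hApq : 0 < δ ^ 2 * dstar ^ 2 * (1 + p) + q := by linarith
  have hqA : q / (δ ^ 2 * dstar ^ 2 * (1 + p)) ≤ δ ^ 2 * p := by
    rw [div_le_iff₀ hA]
    nlinarith [mul_nonneg hp hq, mul_nonneg (mul_nonneg hδ2.le hd2.le) (mul_nonneg hp hp)]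
  have E1 : (1 + δ ^ 2 * p) / (1 + q / (δ ^ 2 * dstar ^ 2 * (1 + p))) - 1
      = (δ ^ 2 * p * (δ ^ 2 * dstar ^ 2 * (1 + p)) - q)
        / (δ ^ 2 * dstar ^ 2 * (1 + p) + q) := by
    have hdne : dstar ≠ 0 := fun h => by simp [h] at hd2
    field_simp
    ring
  have harith := counterexample_arith (δ ^ 2) (δ ^ 2 * dstar ^ 2) s qmax p q hδ2
    (mul_pos hδ2 hd2) hs hqmax (by nlinarith) hp hq hqm hqs
  refine ⟨?_, div_nonneg hq hB.le, ?_, ?_, ?_, ?_⟩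
  · rw [sub_nonneg, le_div_iff₀ hD, one_mul]
    linarith [hqA]
  · rw [div_le_iff₀ hB]
    nlinarith [mul_nonneg (hq.trans hqm) (sub_nonneg.2 hb.le),
      mul_nonneg (mul_nonneg (hq.trans hqm) hbpos.le) hp]
  · rw [div_le_iff₀ hB, E1,
      show s * ((δ ^ 2 * p * (δ ^ 2 * dstar ^ 2 * (1 + p)) - q)
          / (δ ^ 2 * dstar ^ 2 * (1 + p) + q)) * (δ ^ 4 * dstar ^ 2 * (1 + p))
        = (s * (δ ^ 2 * p * (δ ^ 2 * dstar ^ 2 * (1 + p)) - q)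
            * (δ ^ 4 * dstar ^ 2 * (1 + p))) / (δ ^ 2 * dstar ^ 2 * (1 + p) + q)
        from by ring,
      le_div_iff₀ hApq]
    linarith [harith]
  · rw [sub_le_iff_le_add, div_le_iff₀ hD]
    have h7 : (0:ℝ) ≤ δ ^ 2 * p := mul_nonneg hδ2.le hp
    linarith [mul_nonneg (show (0:ℝ) ≤ δ ^ 2 * p + 1 by linarith) hdivA]
  · rw [show (1 / (δ ^ 4 * dstar ^ 2)) * q = q / (δ ^ 4 * dstar ^ 2) from by ring,
      div_le_div_iff₀ hB hbpos]
    linarith [mul_nonneg (mul_nonneg hq hbpos.le) hp]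


/-- **Convergence of the iterates of the counter-example map `f` to `(0,0)`.**
Under the stated conditions on `δ`, `q_max` and `s`, for every starting point
`x` in the region `Ω = {(p,q) : p ≥ 0, 0 ≤ q ≤ q_max, q ≤ s·p}`, the iterates
`f^[n] x` converge to `(0, 0)` as `n → ∞`. -/
theorem counterexample_iterates_tendsto_zero
    (δ : ℝ) (hδ0 : 0 < δ) (hδ1 : δ < 1) (hδ6 : 1 < δ ^ 2 + δ ^ 6)
    (dstar : ℝ) (hdstar : dstar = 1 / Real.sqrt (1 - δ ^ 2))
    (qmax s : ℝ) (hqmax : 0 < qmax) (hs : 0 < s)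
    (hcond : (1 / (δ ^ 4 * dstar ^ 2)) * (1 + qmax / (δ ^ 2 * dstar ^ 2))
      ≤ δ ^ 2 - s / (δ ^ 2 * dstar ^ 2))
    (Ω : Set (ℝ × ℝ))
    (hΩ : Ω = {x : ℝ × ℝ | 0 ≤ x.1 ∧ 0 ≤ x.2 ∧ x.2 ≤ qmax ∧ x.2 ≤ s * x.1})
    (f : ℝ × ℝ → ℝ × ℝ)
    (hf : ∀ x : ℝ × ℝ, f x =
      ((1 + δ ^ 2 * x.1) / (1 + x.2 / (δ ^ 2 * dstar ^ 2 * (1 + x.1))) - 1,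
        x.2 / (δ ^ 4 * dstar ^ 2 * (1 + x.1)))) :
    ∀ x ∈ Ω, Tendsto (fun n => f^[n] x) atTop (nhds ((0 : ℝ), (0 : ℝ))) := by
  have hδ2 : (0:ℝ) < δ ^ 2 := by positivity
  have hu : (0:ℝ) < 1 - δ ^ 2 := by nlinarith
  have hE : dstar ^ 2 * (1 - δ ^ 2) = 1 := by
    rw [hdstar, div_pow, one_pow, Real.sq_sqrt hu.le]
    field_simp
  have hd2 : (0:ℝ) < dstar ^ 2 := by nlinarith
  have hc2 : (0:ℝ) < δ ^ 2 * dstar ^ 2 := mul_pos hδ2 hd2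
  have hb4 : (0:ℝ) < δ ^ 4 * dstar ^ 2 := by positivity
  have h46 : (1:ℝ) < δ ^ 2 + δ ^ 4 := by
    nlinarith [mul_nonneg (pow_nonneg hδ0.le 4) (sub_nonneg.2 (show δ ^ 2 ≤ 1 by nlinarith))]
  have hb : (1:ℝ) < δ ^ 4 * dstar ^ 2 := by
    have h' : (0:ℝ) < δ ^ 2 + δ ^ 4 - 1 := by linarith
    nlinarith [mul_pos hd2 h']
  have hK : δ ^ 2 * dstar ^ 2 + qmax + s * (δ ^ 4 * dstar ^ 2)
      ≤ δ ^ 2 * (δ ^ 4 * dstar ^ 2) * (δ ^ 2 * dstar ^ 2) := by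
    have h := mul_le_mul_of_nonneg_left hcond (mul_pos hb4 hc2).le
    have e1 : (δ ^ 4 * dstar ^ 2) * (δ ^ 2 * dstar ^ 2) *
        ((1 / (δ ^ 4 * dstar ^ 2)) * (1 + qmax / (δ ^ 2 * dstar ^ 2)))
        = δ ^ 2 * dstar ^ 2 + qmax := by
      have hdne : dstar ≠ 0 := fun h => by simp [h] at hd2
      field_simp
    have e2 : (δ ^ 4 * dstar ^ 2) * (δ ^ 2 * dstar ^ 2) *
        (δ ^ 2 - s / (δ ^ 2 * dstar ^ 2))
        = δ ^ 2 * (δ ^ 4 * dstar ^ 2) * (δ ^ 2 * dstar ^ 2) - s * (δ ^ 4 * dstar ^ 2) := by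
      have hdne : dstar ≠ 0 := fun h => by simp [h] at hd2
      field_simp
    rw [e1, e2] at h
    linarith
  have hslt : s < δ ^ 4 * dstar ^ 2 := by
    nlinarith [hK, hb4, hc2, hqmax]
  intro x hx
  subst hΩ
  obtain ⟨hx1, hx2, hx3, hx4⟩ := hx
  have key : ∀ n : ℕ, 0 ≤ (f^[n] x).1 ∧ 0 ≤ (f^[n] x).2 ∧ (f^[n] x).2 ≤ qmax ∧
      (f^[n] x).2 ≤ s * (f^[n] x).1 ∧ (f^[n] x).1 ≤ (δ ^ 2) ^ n * x.1 ∧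
      (f^[n] x).2 ≤ (1 / (δ ^ 4 * dstar ^ 2)) ^ n * x.2 := by
    intro n
    induction n with
    | zero => simpa using ⟨hx1, hx2, hx3, hx4⟩
    | succ n ih =>
      obtain ⟨h1, h2, h3, h4, h5, h6⟩ := ih
      have hstep := counterexample_step δ dstar qmax s hδ0 hδ1 hE hs hqmax hK hb hslt
        (f^[n] x).1 (f^[n] x).2 h1 h2 h3 h4
      rw [Function.iterate_succ_apply', hf (f^[n] x)]
      obtain ⟨g1, g2, g3, g4, g5, g6⟩ := hstep
      refine ⟨g1, g2, g3, g4, ?_, ?_⟩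
      · calc (1 + δ ^ 2 * (f^[n] x).1) /
              (1 + (f^[n] x).2 / (δ ^ 2 * dstar ^ 2 * (1 + (f^[n] x).1))) - 1
            ≤ δ ^ 2 * (f^[n] x).1 := g5
          _ ≤ δ ^ 2 * ((δ ^ 2) ^ n * x.1) := mul_le_mul_of_nonneg_left h5 hδ2.le
          _ = (δ ^ 2) ^ (n + 1) * x.1 := by ring
      · calc (f^[n] x).2 / (δ ^ 4 * dstar ^ 2 * (1 + (f^[n] x).1))
            ≤ (1 / (δ ^ 4 * dstar ^ 2)) * (f^[n] x).2 := g6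
          _ ≤ (1 / (δ ^ 4 * dstar ^ 2)) * ((1 / (δ ^ 4 * dstar ^ 2)) ^ n * x.2) := by
              have := mul_le_mul_of_nonneg_left h6 (le_of_lt (by positivity :
                (0:ℝ) < 1 / (δ ^ 4 * dstar ^ 2)))
              linarith
          _ = (1 / (δ ^ 4 * dstar ^ 2)) ^ (n + 1) * x.2 := by ring
  have hδ2lt : δ ^ 2 < 1 := by nlinarith
  have hrlt : 1 / (δ ^ 4 * dstar ^ 2) < 1 := by
    rw [div_lt_one hb4]; exact hb
  have t1 : Tendsto (fun n : ℕ => (δ ^ 2) ^ n * x.1) atTop (nhds 0) := by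
    simpa using (tendsto_pow_atTop_nhds_zero_of_lt_one hδ2.le hδ2lt).mul_const x.1
  have t2 : Tendsto (fun n : ℕ => (1 / (δ ^ 4 * dstar ^ 2)) ^ n * x.2) atTop (nhds 0) := by
    simpa using (tendsto_pow_atTop_nhds_zero_of_lt_one (by positivity) hrlt).mul_const x.2
  have c1 : Tendsto (fun n => (f^[n] x).1) atTop (nhds 0) :=
    squeeze_zero (fun n => (key n).1) (fun n => (key n).2.2.2.2.1) t1
  have c2 : Tendsto (fun n => (f^[n] x).2) atTop (nhds 0) :=
    squeeze_zero (fun n => (key n).2.1) (fun n => (key n).2.2.2.2.2) t2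
  simpa using c1.prodMk_nhds c2
end

section
/- Let δ > 0 and d₀ > 0, let φ ∈ ℝ with sin φ ≠ 0, and write c = cos φ, σ = sin φ, N = c² + δ²d₀²σ². Let X* = e₁e₁ᵀ be the 2×2 matrix with a single 1 in position (1,1), and let Y₁ = (1/N)·wzᵀ where w = (c, δd₀σ)ᵀ and z = (c, δ²d₀²σ)ᵀ. Then ‖Y₁ − X*‖_F² = δ²d₀²σ²(1 + δ²d₀²)/N = (1 + δ²d₀²)/(1 + cot²φ/(δ²d₀²)). -/
open Matrix

/-- **Error after one projector-splitting step in the 2×2 counter-example.**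
With `X* = e₁e₁ᵀ` and `Y₁ = (1/N)·wzᵀ` where `w = (cos φ, δd₀ sin φ)ᵀ`,
`z = (cos φ, δ²d₀² sin φ)ᵀ` and `N = cos²φ + δ²d₀² sin²φ`, the squared
Frobenius error is
`‖Y₁ − X*‖² = δ²d₀² sin²φ (1 + δ²d₀²)/N = (1 + δ²d₀²)/(1 + cot²φ/(δ²d₀²))`. -/
theorem rank_one_step_error
    (δ d₀ : ℝ) (hδ : 0 < δ) (hd₀ : 0 < d₀) (φ : ℝ)
    (c σ N : ℝ) (hc : c = Real.cos φ) (hσ : σ = Real.sin φ) (hσ0 : σ ≠ 0)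
    (hN : N = c ^ 2 + δ ^ 2 * d₀ ^ 2 * σ ^ 2)
    (Xstar : Matrix (Fin 2) (Fin 2) ℝ) (hXstar : Xstar = !![1, 0; 0, 0])
    (w z : Fin 2 → ℝ)
    (hw : w = ![c, δ * d₀ * σ]) (hz : z = ![c, δ ^ 2 * d₀ ^ 2 * σ])
    (Y₁ : Matrix (Fin 2) (Fin 2) ℝ) (hY₁ : Y₁ = (1 / N) • Matrix.vecMulVec w z) :
    frobNorm (Y₁ - Xstar) ^ 2 = δ ^ 2 * d₀ ^ 2 * σ ^ 2 * (1 + δ ^ 2 * d₀ ^ 2) / N ∧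
      frobNorm (Y₁ - Xstar) ^ 2 =
        (1 + δ ^ 2 * d₀ ^ 2) / (1 + (c / σ) ^ 2 / (δ ^ 2 * d₀ ^ 2)) := by
  have hδ0 : δ ≠ 0 := ne_of_gt hδ
  have hd0 : d₀ ≠ 0 := ne_of_gt hd₀
  have hNpos : 0 < N := by
    rw [hN]
    have : 0 < δ ^ 2 * d₀ ^ 2 * σ ^ 2 := by positivity
    nlinarith [sq_nonneg c]
  have hN0 : N ≠ 0 := ne_of_gt hNpos
  have hsum : (∑ i, ∑ j, ((Y₁ - Xstar) i j) ^ 2)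
      = δ ^ 2 * d₀ ^ 2 * σ ^ 2 * (1 + δ ^ 2 * d₀ ^ 2) / N := by
    subst hY₁ hXstar hw hz
    simp only [Fin.sum_univ_two, Matrix.sub_apply, Matrix.smul_apply,
      Matrix.vecMulVec_apply, Matrix.cons_val_zero, Matrix.cons_val_one,
      Matrix.head_cons, Matrix.of_apply, smul_eq_mul]
    field_simp
    rw [hN]
    ring
  have hkey : frobNorm (Y₁ - Xstar) ^ 2
      = δ ^ 2 * d₀ ^ 2 * σ ^ 2 * (1 + δ ^ 2 * d₀ ^ 2) / N := by
    rw [frobNorm, Real.sq_sqrt, hsum]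
    positivity
  refine ⟨hkey, ?_⟩
  rw [hkey, hN]
  field_simp
  ring
end

section
/- Let 0 < δ < 1, set d* = 1/√(1−δ²), and define Φ : ℝ^{2×2} → ℝ^{2×2} by Φ(Y) = X* + δ‖Y − X*‖_F X⊥, where X* = e₁e₁ᵀ and X⊥ = e₂e₂ᵀ. Let Y* = δd*·X⊥. Then: (i) ‖Y* − X*‖_F = d*, so Φ(Y*) = X* + δd*·X⊥ = diag(1, δd*); (ii) with right factor v₀ = e₂ = (0,1)ᵀ, w = Φ(Y*)v₀ = (0, δd*)ᵀ and P = wwᵀ/‖w‖², one projector-splitting step at Y* returns Y* itself: PΦ(Y*) + Φ(Y*)v₀v₀ᵀ − PΦ(Y*)v₀v₀ᵀ = Y*; and (iii) Y* ≠ X*. Hence the projector-splitting iteration for the δ-contraction Φ admits a spurious fixed point different from the unique fixed point X* of Φ. -/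
open Matrix

/-- **Spurious fixed point of the projector-splitting iteration.** For the
δ-contraction `Φ(Y) = X* + δ‖Y − X*‖_F X⊥` with `X* = e₁e₁ᵀ`, `X⊥ = e₂e₂ᵀ`
and `d* = 1/√(1−δ²)`, the point `Y* = δd*·X⊥` satisfies:
(i) `‖Y* − X*‖_F = d*`, so `Φ(Y*) = X* + δd*·X⊥ = diag(1, δd*)`;
(ii) one projector-splitting step at `Y*` with right factor `v₀ = e₂` returns
`Y*` itself; and (iii) `Y* ≠ X*`. -/
theorem spurious_fixed_point
    (δ : ℝ) (hδ0 : 0 < δ) (hδ1 : δ < 1)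
    (dstar : ℝ) (hdstar : dstar = 1 / Real.sqrt (1 - δ ^ 2))
    (Xstar Xperp : Matrix (Fin 2) (Fin 2) ℝ)
    (hXstar : Xstar = !![1, 0; 0, 0]) (hXperp : Xperp = !![0, 0; 0, 1])
    (Φ : Matrix (Fin 2) (Fin 2) ℝ → Matrix (Fin 2) (Fin 2) ℝ)
    (hΦ : ∀ Y, Φ Y = Xstar + (δ * frobNorm (Y - Xstar)) • Xperp)
    (Ystar : Matrix (Fin 2) (Fin 2) ℝ) (hYstar : Ystar = (δ * dstar) • Xperp)
    (v₀ w : Fin 2 → ℝ) (hv₀ : v₀ = ![0, 1]) (hw : w = (Φ Ystar).mulVec v₀)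
    (P : Matrix (Fin 2) (Fin 2) ℝ)
    (hP : P = ((δ * dstar) ^ 2)⁻¹ • Matrix.vecMulVec w w) :
    frobNorm (Ystar - Xstar) = dstar ∧
      Φ Ystar = Xstar + (δ * dstar) • Xperp ∧
      Φ Ystar = Matrix.diagonal ![1, δ * dstar] ∧
      w = ![0, δ * dstar] ∧
      P * Φ Ystar + Φ Ystar * Matrix.vecMulVec v₀ v₀
          - P * Φ Ystar * Matrix.vecMulVec v₀ v₀ = Ystar ∧
      Ystar ≠ Xstar := by
  have h1 : (0:ℝ) < 1 - δ ^ 2 := by nlinarith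
  have hs : 0 < Real.sqrt (1 - δ ^ 2) := Real.sqrt_pos.mpr h1
  have hd0 : 0 < dstar := by rw [hdstar]; positivity
  have hd2 : dstar ^ 2 = 1 / (1 - δ ^ 2) := by
    rw [hdstar, div_pow, one_pow, Real.sq_sqrt h1.le]
  -- (i)
  have hfrob : frobNorm (Ystar - Xstar) = dstar := by
    have hsum : (∑ i, ∑ j, ((Ystar - Xstar) i j) ^ 2) = dstar ^ 2 := by
      simp [hYstar, hXstar, hXperp, Fin.sum_univ_two]
      have hm : dstar ^ 2 * (1 - δ ^ 2) = 1 := by rw [hd2]; field_simp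
      nlinarith [hm]
    rw [frobNorm, hsum, Real.sqrt_sq hd0.le]
  have hΦY : Φ Ystar = Xstar + (δ * dstar) • Xperp := by rw [hΦ, hfrob]
  have hΦdiag : Φ Ystar = Matrix.diagonal ![1, δ * dstar] := by
    rw [hΦY, hXstar, hXperp]
    ext i j
    fin_cases i <;> fin_cases j <;> simp [Matrix.diagonal]
  have hwv : w = ![0, δ * dstar] := by
    rw [hw, hΦdiag, hv₀]
    ext i
    fin_cases i <;> simp [Matrix.mulVec, Matrix.diagonal, dotProduct, Fin.sum_univ_two]
  have hne : (δ * dstar) ≠ 0 := by positivity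
  refine ⟨hfrob, hΦY, hΦdiag, hwv, ?_, ?_⟩
  · ext i j
    rw [hP, hwv, hΦdiag, hv₀, hYstar, hXperp]
    fin_cases i <;> fin_cases j <;>
      simp [Matrix.mul_apply, Matrix.vecMulVec, Matrix.diagonal, Fin.sum_univ_two,
        Matrix.smul_apply]
  · intro h
    have := congrArg (fun M => M 0 0) h
    simp [hYstar, hXstar, hXperp] at this
end
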